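/- arXiv:2108.10284 — 6 statements merged into one kernel-verified Lean document; each statement's English description precedes it below -/
import Mathlib

section
/- The dual norm of Ω_excl is given by Ω*_excl(u) = sqrt(Σ_{G∈𝒢} ‖u_G‖_∞²), i.e., sup{uᵀx : Ω_excl(x) ≤ 1} = sqrt(Σ_{G∈𝒢} ‖u_G‖_∞²) for every u ∈ ℝ^p. -/
/-- The exclusive group sparsity norm: groups are the fibers of `g : Fin p → Fin k`. -/
noncomputable def OmegaExcl {p k : ℕ} (g : Fin p → Fin k) (x : Fin p → ℝ) : ℝ :=
  Real.sqrt (∑ j : Fin k, (∑ i ∈ Finset.univ.filter (fun i => g i = j), |x i|) ^ 2)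

/-- The ℓ∞ norm of the subvector of `u` on the group `j`. -/
noncomputable def groupLinf {p k : ℕ} (g : Fin p → Fin k) (u : Fin p → ℝ) (j : Fin k) : ℝ :=
  (((Finset.univ.filter (fun i => g i = j)).sup (fun i => ‖u i‖₊) : NNReal) : ℝ)

/-- The dual norm of `Ω_excl` is `u ↦ sqrt (Σ_G ‖u_G‖_∞²)`. -/
theorem omegaExcl_dual {p k : ℕ} (g : Fin p → Fin k)
    (hsurj : Function.Surjective g) (u : Fin p → ℝ) :
    sSup {r : ℝ | ∃ x : Fin p → ℝ, OmegaExcl g x ≤ 1 ∧ r = ∑ i, u i * x i} =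
      Real.sqrt (∑ j : Fin k, (groupLinf g u j) ^ 2) := by
  classical
  set M : Fin k → ℝ := groupLinf g u with hM
  set D : ℝ := Real.sqrt (∑ j : Fin k, M j ^ 2) with hD
  set S : Set ℝ := {r : ℝ | ∃ x : Fin p → ℝ, OmegaExcl g x ≤ 1 ∧ r = ∑ i, u i * x i} with hS
  have hMnn : ∀ j, 0 ≤ M j := fun j => NNReal.coe_nonneg _
  have hDnn : 0 ≤ D := Real.sqrt_nonneg _
  have hfact1 : ∀ i, |u i| ≤ M (g i) := by
    intro i
    have h : ‖u i‖₊ ≤ (Finset.univ.filter (fun i' => g i' = g i)).sup (fun i' => ‖u i'‖₊) :=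
      Finset.le_sup (f := fun i' => ‖u i'‖₊) (Finset.mem_filter.mpr ⟨Finset.mem_univ i, rfl⟩)
    have := NNReal.coe_le_coe.mpr h
    simpa [hM, groupLinf, Real.norm_eq_abs] using this
  -- the upper bound
  have hub : ∀ r ∈ S, r ≤ D := by
    rintro r ⟨x, hx, rfl⟩
    have hsplit : ∑ i, u i * x i
        = ∑ j : Fin k, ∑ i ∈ Finset.univ.filter (fun i => g i = j), u i * x i :=
      (Finset.sum_fiberwise _ _ _).symm
    have h1 : ∀ j : Fin k, ∑ i ∈ Finset.univ.filter (fun i => g i = j), u i * x i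
        ≤ M j * ∑ i ∈ Finset.univ.filter (fun i => g i = j), |x i| := by
      intro j
      rw [Finset.mul_sum]
      refine Finset.sum_le_sum fun i hi => ?_
      have hgi : g i = j := (Finset.mem_filter.mp hi).2
      calc u i * x i ≤ |u i * x i| := le_abs_self _
        _ = |u i| * |x i| := abs_mul _ _
        _ ≤ M j * |x i| := by
            have := hfact1 i; rw [hgi] at this
            exact mul_le_mul_of_nonneg_right this (abs_nonneg _)
    have h2 : ∑ i, u i * x i
        ≤ ∑ j : Fin k, M j * ∑ i ∈ Finset.univ.filter (fun i => g i = j), |x i| := by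
      rw [hsplit]; exact Finset.sum_le_sum fun j _ => h1 j
    have h3 := Real.sum_mul_le_sqrt_mul_sqrt Finset.univ M
      (fun j => ∑ i ∈ Finset.univ.filter (fun i => g i = j), |x i|)
    have h4 : Real.sqrt (∑ j : Fin k,
        (∑ i ∈ Finset.univ.filter (fun i => g i = j), |x i|) ^ 2) = OmegaExcl g x := rfl
    calc ∑ i, u i * x i ≤ _ := h2
      _ ≤ D * OmegaExcl g x := by rw [← h4]; exact h3
      _ ≤ D * 1 := mul_le_mul_of_nonneg_left hx hDnn
      _ = D := mul_one D
  have hzero_mem : (∑ i, u i * (0 : Fin p → ℝ) i) ∈ S := by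
    refine ⟨0, ?_, rfl⟩
    simp [OmegaExcl]
  have hne : S.Nonempty := ⟨_, hzero_mem⟩
  by_cases hD0 : D = 0
  · -- then u = 0 and S = {0}
    have hsum0 : ∑ j : Fin k, M j ^ 2 = 0 := by
      have h := Real.sqrt_eq_zero'.mp hD0
      exact le_antisymm h (Finset.sum_nonneg fun j _ => sq_nonneg _)
    have hMj : ∀ j, M j = 0 := by
      intro j
      have := (Finset.sum_eq_zero_iff_of_nonneg
        (fun j _ => sq_nonneg (M j))).mp hsum0 j (Finset.mem_univ j)
      exact pow_eq_zero_iff (by norm_num) |>.mp this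
    have hu0 : ∀ i, u i = 0 := by
      intro i
      have := hfact1 i
      rw [hMj (g i)] at this
      exact abs_nonpos_iff.mp this
    have hSeq : S = {0} := by
      ext r
      constructor
      · rintro ⟨x, hx, rfl⟩
        simp [hu0]
      · rintro rfl
        exact ⟨0, by simp [OmegaExcl], by simp⟩
    rw [hSeq, csSup_singleton]
    exact hD0.symm
  · have hDpos : 0 < D := lt_of_le_of_ne hDnn (Ne.symm hD0)
    -- choose maximizers in each group
    have hfib : ∀ j : Fin k, (Finset.univ.filter (fun i => g i = j)).Nonempty := by
      intro j
      obtain ⟨i, hi⟩ := hsurj j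
      exact ⟨i, Finset.mem_filter.mpr ⟨Finset.mem_univ i, hi⟩⟩
    have hchoice : ∀ j : Fin k, ∃ i, g i = j ∧ |u i| = M j := by
      intro j
      obtain ⟨i, hi, hsup⟩ := Finset.exists_mem_eq_sup
        (Finset.univ.filter (fun i => g i = j)) (hfib j) (fun i => ‖u i‖₊)
      refine ⟨i, (Finset.mem_filter.mp hi).2, ?_⟩
      have : (((Finset.univ.filter (fun i' => g i' = j)).sup (fun i' => ‖u i'‖₊) : NNReal) : ℝ)
          = ((‖u i‖₊ : NNReal) : ℝ) := by rw [hsup]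
      simp only [coe_nnnorm, Real.norm_eq_abs] at this
      rw [hM]; unfold groupLinf
      exact this.symm
    choose c hc hcval using hchoice
    -- the maximizing point
    set x : Fin p → ℝ := fun i => if i = c (g i) then u i / D else 0 with hx
    have hfiber_sum : ∀ (f : Fin p → ℝ) (j : Fin k), (∀ i, g i = j → i ≠ c j → f i = 0) →
        ∑ i ∈ Finset.univ.filter (fun i => g i = j), f i = f (c j) := by
      intro f j hf
      refine Finset.sum_eq_single_of_mem (c j)
        (Finset.mem_filter.mpr ⟨Finset.mem_univ _, hc j⟩) ?_
      intro i hi hne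
      exact hf i (Finset.mem_filter.mp hi).2 hne
    have habs : ∀ j : Fin k, ∑ i ∈ Finset.univ.filter (fun i => g i = j), |x i| = M j / D := by
      intro j
      rw [hfiber_sum (fun i => |x i|) j ?_]
      · have : x (c j) = u (c j) / D := by
          simp only [hx]
          rw [if_pos (by rw [hc j])]
        rw [this, abs_div, abs_of_pos hDpos, hcval j]
      · intro i hgi hne
        simp only [hx]
        rw [if_neg (by rw [hgi]; exact hne), abs_zero]
    have hOmega : OmegaExcl g x = 1 := by
      unfold OmegaExcl
      have : ∀ j : Fin k, (∑ i ∈ Finset.univ.filter (fun i => g i = j), |x i|) ^ 2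
          = M j ^ 2 / D ^ 2 := by
        intro j; rw [habs j, div_pow]
      rw [Finset.sum_congr rfl (fun j _ => this j), ← Finset.sum_div]
      have hDsq : D ^ 2 = ∑ j : Fin k, M j ^ 2 := Real.sq_sqrt (by positivity)
      rw [← hDsq, div_self (by positivity), Real.sqrt_one]
    have hval : ∑ i, u i * x i = D := by
      have hsplit : ∑ i, u i * x i
          = ∑ j : Fin k, ∑ i ∈ Finset.univ.filter (fun i => g i = j), u i * x i :=
        (Finset.sum_fiberwise _ _ _).symm
      rw [hsplit]
      have hterm : ∀ j : Fin k,
          ∑ i ∈ Finset.univ.filter (fun i => g i = j), u i * x i = M j ^ 2 / D := by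
        intro j
        rw [hfiber_sum (fun i => u i * x i) j ?_]
        · have hxc : x (c j) = u (c j) / D := by
            simp only [hx]; rw [if_pos (by rw [hc j])]
          rw [hxc]
          have : u (c j) * (u (c j) / D) = u (c j) ^ 2 / D := by ring
          rw [this, ← sq_abs, hcval j]
        · intro i hgi hne
          simp only [hx]
          rw [if_neg (by rw [hgi]; exact hne), mul_zero]
      rw [Finset.sum_congr rfl (fun j _ => hterm j), ← Finset.sum_div]
      have hDsq : (∑ j : Fin k, M j ^ 2) = D ^ 2 := (Real.sq_sqrt (by positivity)).symm
      rw [hDsq]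
      field_simp
    have hmem : D ∈ S := ⟨x, le_of_eq hOmega, hval.symm⟩
    exact le_antisymm (csSup_le hne hub) (le_csSup ⟨D, hub⟩ hmem)
end

section
/- For every nonzero x ∈ ℝ^p, a vector u ∈ ℝ^p satisfies uᵀx = Ω_excl(x) and Ω*_excl(u) ≤ 1 if and only if: for every index i with x_i ≠ 0, |u_i| = ‖x_{G_i}‖₁ / Ω_excl(x) and sign(u_i) = sign(x_i); and for every index i with x_i = 0, |u_i| ≤ ‖x_{G_i}‖₁ / Ω_excl(x). Here G_i denotes the unique group containing i. -/
/-- The ℓ₁ norm of the subvector of `x` on the group `j`. -/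
noncomputable def groupL1 {p k : ℕ} (g : Fin p → Fin k) (x : Fin p → ℝ) (j : Fin k) : ℝ :=
  ∑ i ∈ Finset.univ.filter (fun i => g i = j), |x i|

/-- The dual norm of the exclusive group sparsity norm. -/
noncomputable def OmegaExclDual {p k : ℕ} (g : Fin p → Fin k) (u : Fin p → ℝ) : ℝ :=
  Real.sqrt (∑ j : Fin k, (groupLinf g u j) ^ 2)

open Finset

lemma sqrt_sum_sq_mul_eq_of_le_sum_mul {ι : Type*} [Fintype ι] {a b : ι → ℝ}
    (hb : ∑ i, b i ^ 2 ≤ 1) (hab : √(∑ i, a i ^ 2) ≤ ∑ i, a i * b i) (i : ι) :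
    √(∑ i, a i ^ 2) * b i = a i := by
  set r := √(∑ i, a i ^ 2)
  have hr : r ^ 2 = ∑ i, a i ^ 2 := Real.sq_sqrt (sum_nonneg fun i _ => sq_nonneg (a i))
  have hexpand : ∑ i, (r * b i - a i) ^ 2
      = r ^ 2 * ∑ i, b i ^ 2 - 2 * r * ∑ i, a i * b i + ∑ i, a i ^ 2 := by
    simp only [sub_sq, sum_add_distrib, sum_sub_distrib, mul_sum]
    congr 2 <;> refine sum_congr rfl fun i _ => by ring
  have hzero : ∑ i, (r * b i - a i) ^ 2 = 0 := by
    refine le_antisymm ?_ (sum_nonneg fun i _ => sq_nonneg _)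
    nlinarith [Real.sqrt_nonneg (∑ i, a i ^ 2), sq_nonneg r]
  have := (sum_eq_zero_iff_of_nonneg fun i _ => sq_nonneg (r * b i - a i)).1 hzero i (mem_univ i)
  linarith [pow_eq_zero_iff (n := 2) two_ne_zero |>.1 this]

lemma mul_eq_mul_abs_iff {u x m : ℝ} (hx : x ≠ 0) (hm : 0 < m) :
    u * x = m * |x| ↔ |u| = m ∧ Real.sign u = Real.sign x := by
  have hsign_m : Real.sign m = 1 := Real.sign_of_pos hm
  have hsign_neg_m : Real.sign (-m) = -1 := Real.sign_of_neg (neg_neg_of_pos hm)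
  rcases hx.lt_or_gt with hneg | hpos
  · rw [abs_of_neg hneg, Real.sign_of_neg hneg, mul_neg, ← neg_mul, mul_left_inj' hx]
    constructor
    · rintro rfl
      exact ⟨by rw [abs_neg, abs_of_pos hm], hsign_neg_m⟩
    · rintro ⟨habs, hsign⟩
      rcases (abs_eq hm.le).1 habs with rfl | rfl
      · norm_num [hsign_m] at hsign
      · rfl
  · rw [abs_of_pos hpos, Real.sign_of_pos hpos, mul_left_inj' hx]
    constructor
    · rintro rfl
      exact ⟨abs_of_pos hm, hsign_m⟩
    · rintro ⟨habs, hsign⟩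
      rcases (abs_eq hm.le).1 habs with rfl | rfl
      · rfl
      · norm_num [hsign_neg_m] at hsign

lemma abs_le_and_mul_eq_mul_abs_iff {u x m : ℝ} (hm : x ≠ 0 → 0 < m) :
    ((x ≠ 0 → |u| = m ∧ Real.sign u = Real.sign x) ∧ (x = 0 → |u| ≤ m)) ↔
      |u| ≤ m ∧ u * x = m * |x| := by
  rcases eq_or_ne x 0 with rfl | hx
  · simp
  · simp only [ne_eq, hx, not_false_eq_true, forall_const, false_implies, and_true,
      mul_eq_mul_abs_iff hx (hm hx)]
    exact ⟨fun h => ⟨h.1.le, h⟩, And.right⟩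

section GroupNorms

variable {p k : ℕ} (g : Fin p → Fin k)

lemma abs_le_groupL1 (x : Fin p → ℝ) (i : Fin p) : |x i| ≤ groupL1 g x (g i) :=
  single_le_sum (f := fun i' => |x i'|) (fun _ _ => abs_nonneg _) (by simp)

lemma groupL1_pos {x : Fin p → ℝ} {i : Fin p} (hi : x i ≠ 0) : 0 < groupL1 g x (g i) :=
  (abs_pos.2 hi).trans_le (abs_le_groupL1 g x i)

lemma sum_comp_mul_abs_eq_sum_mul_groupL1 (c : Fin k → ℝ) (x : Fin p → ℝ) :
    ∑ i, c (g i) * |x i| = ∑ j, c j * groupL1 g x j := by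
  rw [← sum_fiberwise univ g]
  refine sum_congr rfl fun j _ => ?_
  rw [groupL1, mul_sum]
  exact sum_congr rfl fun i hi => by rw [(mem_filter.1 hi).2]

lemma omegaExcl_sq (x : Fin p → ℝ) : OmegaExcl g x ^ 2 = ∑ j, groupL1 g x j ^ 2 :=
  Real.sq_sqrt (sum_nonneg fun _ _ => sq_nonneg _)

lemma omegaExcl_pos {x : Fin p → ℝ} (hx : x ≠ 0) : 0 < OmegaExcl g x := by
  obtain ⟨i, hi⟩ := Function.ne_iff.1 hx
  refine Real.sqrt_pos.2 ((pow_pos (groupL1_pos g hi) 2).trans_le ?_)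
  exact single_le_sum (f := fun j => groupL1 g x j ^ 2) (fun _ _ => sq_nonneg _) (mem_univ _)

lemma groupLinf_nonneg (u : Fin p → ℝ) (j : Fin k) : 0 ≤ groupLinf g u j :=
  NNReal.coe_nonneg _

lemma groupLinf_le_iff {u : Fin p → ℝ} {j : Fin k} {c : ℝ} (hc : 0 ≤ c) :
    groupLinf g u j ≤ c ↔ ∀ i, g i = j → |u i| ≤ c := by
  rw [groupLinf, ← Real.coe_toNNReal c hc, NNReal.coe_le_coe, Finset.sup_le_iff]
  simp [← NNReal.coe_le_coe, hc]

lemma abs_le_groupLinf (u : Fin p → ℝ) (i : Fin p) : |u i| ≤ groupLinf g u (g i) :=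
  (groupLinf_le_iff g (groupLinf_nonneg g u _)).1 le_rfl i rfl

lemma mul_le_groupLinf_mul_abs (u x : Fin p → ℝ) (i : Fin p) :
    u i * x i ≤ groupLinf g u (g i) * |x i| :=
  (le_abs_self _).trans ((abs_mul _ _).trans_le
    (mul_le_mul_of_nonneg_right (abs_le_groupLinf g u i) (abs_nonneg _)))

lemma sum_groupLinf_mul_groupL1_le (u x : Fin p → ℝ) :
    ∑ j, groupLinf g u j * groupL1 g x j ≤ OmegaExclDual g u * OmegaExcl g x :=
  Real.sum_mul_le_sqrt_mul_sqrt _ _ _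

lemma mul_eq_groupLinf_mul_abs_of_sum_mul_eq {u x : Fin p → ℝ}
    (hsum : ∑ i, u i * x i = OmegaExcl g x) (hdual : OmegaExclDual g u ≤ 1) (i : Fin p) :
    u i * x i = groupLinf g u (g i) * |x i| := by
  have hle := mul_le_groupLinf_mul_abs g u x
  have hupper : ∑ i, groupLinf g u (g i) * |x i| ≤ OmegaExcl g x := by
    rw [sum_comp_mul_abs_eq_sum_mul_groupL1]
    exact (sum_groupLinf_mul_groupL1_le g u x).trans
      (mul_le_of_le_one_left (Real.sqrt_nonneg _) hdual)
  exact (sum_eq_sum_iff_of_le fun i _ => hle i).1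
    ((sum_le_sum fun i _ => hle i).antisymm (hupper.trans hsum.ge)) i (mem_univ i)

lemma groupLinf_eq_of_sum_mul_eq {u x : Fin p → ℝ} (hx : x ≠ 0)
    (hsum : ∑ i, u i * x i = OmegaExcl g x) (hdual : OmegaExclDual g u ≤ 1) (j : Fin k) :
    groupLinf g u j = groupL1 g x j / OmegaExcl g x := by
  have hpair : OmegaExcl g x = ∑ j, groupL1 g x j * groupLinf g u j := by
    rw [← hsum, sum_congr rfl fun i _ => mul_eq_groupLinf_mul_abs_of_sum_mul_eq g hsum hdual i,
      sum_comp_mul_abs_eq_sum_mul_groupL1]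
    simp only [mul_comm]
  refine eq_div_of_mul_eq (omegaExcl_pos g hx).ne' ?_
  rw [mul_comm]
  exact sqrt_sum_sq_mul_eq_of_le_sum_mul (Real.sqrt_le_one.1 hdual) hpair.le j

lemma sum_mul_eq_omegaExcl_of_mul_eq {u x : Fin p → ℝ} (hx : x ≠ 0)
    (hterm : ∀ i, u i * x i = groupL1 g x (g i) / OmegaExcl g x * |x i|) :
    ∑ i, u i * x i = OmegaExcl g x := by
  calc ∑ i, u i * x i = ∑ j, groupL1 g x j / OmegaExcl g x * groupL1 g x j := by
        rw [sum_congr rfl fun i _ => hterm i]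
        exact sum_comp_mul_abs_eq_sum_mul_groupL1 g (fun j => groupL1 g x j / OmegaExcl g x) x
    _ = (∑ j, groupL1 g x j ^ 2) / OmegaExcl g x := by
        rw [sum_div]
        exact sum_congr rfl fun j _ => by ring
    _ = OmegaExcl g x := by
        rw [← omegaExcl_sq, sq, mul_div_cancel_right₀ _ (omegaExcl_pos g hx).ne']

lemma omegaExclDual_le_one_of_abs_le {u x : Fin p → ℝ} (hx : x ≠ 0)
    (hub : ∀ i, |u i| ≤ groupL1 g x (g i) / OmegaExcl g x) : OmegaExclDual g u ≤ 1 := by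
  have hΩ := omegaExcl_pos g hx
  have hM (j : Fin k) : groupLinf g u j ≤ groupL1 g x j / OmegaExcl g x :=
    (groupLinf_le_iff g (div_nonneg (sum_nonneg fun _ _ => abs_nonneg _) hΩ.le)).2
      fun i hi => hi ▸ hub i
  refine Real.sqrt_le_one.2 ?_
  calc ∑ j, groupLinf g u j ^ 2 ≤ ∑ j, (groupL1 g x j / OmegaExcl g x) ^ 2 :=
        sum_le_sum fun j _ => pow_le_pow_left₀ (groupLinf_nonneg g u j) (hM j) 2
    _ = 1 := by
        simp only [div_pow]
        rw [← sum_div, ← omegaExcl_sq, div_self (pow_ne_zero 2 hΩ.ne')]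

end GroupNorms

theorem omegaExcl_subdiff_char_general {p k : ℕ} (g : Fin p → Fin k)
    (x : Fin p → ℝ) (hx : x ≠ 0) (u : Fin p → ℝ) :
    ((∑ i, u i * x i) = OmegaExcl g x ∧ OmegaExclDual g u ≤ 1) ↔
      ((∀ i, x i ≠ 0 →
          |u i| = groupL1 g x (g i) / OmegaExcl g x ∧ Real.sign (u i) = Real.sign (x i)) ∧
       (∀ i, x i = 0 → |u i| ≤ groupL1 g x (g i) / OmegaExcl g x)) := by
  rw [← forall_and, forall_congr' fun i => abs_le_and_mul_eq_mul_abs_iff fun hi =>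
    div_pos (groupL1_pos g hi) (omegaExcl_pos g hx), forall_and]
  constructor
  · rintro ⟨hsum, hdual⟩
    have hM := groupLinf_eq_of_sum_mul_eq g hx hsum hdual
    refine ⟨fun i => (abs_le_groupLinf g u i).trans_eq (hM _), fun i => ?_⟩
    rw [mul_eq_groupLinf_mul_abs_of_sum_mul_eq g hsum hdual i, hM]
  · rintro ⟨hub, hterm⟩
    exact ⟨sum_mul_eq_omegaExcl_of_mul_eq g hx hterm, omegaExclDual_le_one_of_abs_le g hx hub⟩

/-- Characterization of the subdifferential of `Ω_excl` at a nonzero point. -/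
theorem omegaExcl_subdiff_char {p k : ℕ} (g : Fin p → Fin k)
    (hsurj : Function.Surjective g) (x : Fin p → ℝ) (hx : x ≠ 0) (u : Fin p → ℝ) :
    ((∑ i, u i * x i) = OmegaExcl g x ∧ OmegaExclDual g u ≤ 1) ↔
      ((∀ i, x i ≠ 0 →
          |u i| = groupL1 g x (g i) / OmegaExcl g x ∧ Real.sign (u i) = Real.sign (x i)) ∧
       (∀ i, x i = 0 → |u i| ≤ groupL1 g x (g i) / OmegaExcl g x)) :=
  omegaExcl_subdiff_char_general g x hx u
end

section
/- For any x ∈ ℝ^p, Ω_excl(x) equals the maximum of uᵀx over all u ∈ ℝ^p and nonnegative reals {t_G}_{G∈𝒢} satisfying u_i² ≤ t_G for all i ∈ G, all G ∈ 𝒢, and Σ_{G∈𝒢} t_G ≤ 1. -/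
/-- Second variational formulation: `Ω_excl(x)` is the maximum of `uᵀx` subject to
`u_i² ≤ t_{G_i}` for all `i` and `Σ_G t_G ≤ 1` with `t_G ≥ 0`. -/
theorem omegaExcl_variational {p k : ℕ} (g : Fin p → Fin k) (x : Fin p → ℝ) :
    IsGreatest
      {r : ℝ | ∃ (u : Fin p → ℝ) (t : Fin k → ℝ), (∀ j, 0 ≤ t j) ∧
        (∀ i, (u i) ^ 2 ≤ t (g i)) ∧ (∑ j, t j) ≤ 1 ∧ r = ∑ i, u i * x i}
      (OmegaExcl g x) := by
  set S : Fin k → ℝ := fun j => ∑ i ∈ Finset.univ.filter (fun i => g i = j), |x i| with hS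
  have hSnn : ∀ j, 0 ≤ S j := fun j => Finset.sum_nonneg fun i _ => abs_nonneg _
  set Q : ℝ := ∑ j : Fin k, (S j) ^ 2 with hQ
  have hQnn : 0 ≤ Q := Finset.sum_nonneg fun j _ => sq_nonneg _
  set N : ℝ := Real.sqrt Q with hN
  have hNnn : 0 ≤ N := Real.sqrt_nonneg _
  have hN2 : N ^ 2 = Q := Real.sq_sqrt hQnn
  have hOm : OmegaExcl g x = N := rfl
  constructor
  · -- membership
    rcases eq_or_lt_of_le hNnn with h0 | hpos
    ·
      refine ⟨0, 0, fun j => le_refl 0, fun i => by simp, by simp, ?_⟩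
      have hQ0 : ∑ j : Fin k, (S j) ^ 2 = 0 := by rw [← hQ, ← hN2, ← h0]; ring
      have hSj : ∀ j, S j = 0 := by
        intro j
        have := (Finset.sum_eq_zero_iff_of_nonneg (fun j _ => sq_nonneg (S j))).1 hQ0 j
          (Finset.mem_univ j)
        exact pow_eq_zero_iff (by norm_num) |>.1 this
      have hx : ∀ i, x i = 0 := by
        intro i
        have := (Finset.sum_eq_zero_iff_of_nonneg (fun i _ => abs_nonneg (x i))).1
          (hSj (g i)) i (by simp)
        exact abs_eq_zero.1 this
      rw [hOm, ← h0]
      simp [hx]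
    · refine ⟨fun i => if 0 ≤ x i then S (g i) / N else -(S (g i) / N),
        fun j => (S j / N) ^ 2, fun j => sq_nonneg _, ?_, ?_, ?_⟩
      · intro i; rcases le_or_gt 0 (x i) with h | h
        · simp [h]
        · simp [not_le.2 h, neg_sq]
      · have : ∑ j, (S j / N) ^ 2 = Q / N ^ 2 := by
          rw [hQ, Finset.sum_div]; exact Finset.sum_congr rfl fun j _ => by ring
        rw [this, hN2]
        exact le_of_eq (div_self (ne_of_gt (by nlinarith)))
      · have key : ∀ i : Fin p,
            (if 0 ≤ x i then S (g i) / N else -(S (g i) / N)) * x i = S (g i) / N * |x i| := by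
          intro i; rcases le_or_gt 0 (x i) with h | h
          · simp [h, abs_of_nonneg h]
          · simp [not_le.2 h, abs_of_neg h]
        rw [hOm]
        calc N = Q / N := by rw [← hN2, sq, mul_div_assoc, div_self hpos.ne', mul_one]
        _ = ∑ j, S j * S j / N := by
            rw [hQ, Finset.sum_div]; exact Finset.sum_congr rfl fun j _ => by ring
        _ = ∑ j, ∑ i ∈ Finset.univ.filter (fun i => g i = j), S j / N * |x i| := by
            refine Finset.sum_congr rfl fun j _ => ?_
            rw [← Finset.mul_sum]
            show S j * S j / N = S j / N * S j
            ring
        _ = ∑ i, S (g i) / N * |x i| := by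
            rw [← Finset.sum_fiberwise Finset.univ g (fun i => S (g i) / N * |x i|)]
            refine Finset.sum_congr rfl fun j _ => Finset.sum_congr rfl fun i hi => ?_
            rw [(Finset.mem_filter.1 hi).2]
        _ = ∑ i, (if 0 ≤ x i then S (g i) / N else -(S (g i) / N)) * x i := by
            exact (Finset.sum_congr rfl fun i _ => (key i)).symm
  · -- upper bound
    rintro r ⟨u, t, htnn, hut, ht1, rfl⟩
    calc ∑ i, u i * x i ≤ ∑ i, Real.sqrt (t (g i)) * |x i| := by
          refine Finset.sum_le_sum fun i _ => ?_
          calc u i * x i ≤ |u i * x i| := le_abs_self _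
          _ = |u i| * |x i| := abs_mul _ _
          _ ≤ Real.sqrt (t (g i)) * |x i| := by
              refine mul_le_mul_of_nonneg_right ?_ (abs_nonneg _)
              rw [← Real.sqrt_sq_eq_abs]
              exact Real.sqrt_le_sqrt (hut i)
    _ = ∑ j, Real.sqrt (t j) * S j := by
          rw [← Finset.sum_fiberwise Finset.univ g (fun i => Real.sqrt (t (g i)) * |x i|)]
          refine Finset.sum_congr rfl fun j _ => ?_
          rw [show S j = ∑ i ∈ Finset.univ.filter (fun i => g i = j), |x i| from rfl,
            Finset.mul_sum]
          exact Finset.sum_congr rfl fun i hi => by rw [(Finset.mem_filter.1 hi).2]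
    _ ≤ Real.sqrt (∑ j, (Real.sqrt (t j)) ^ 2) * Real.sqrt (∑ j, (S j) ^ 2) :=
          Real.sum_mul_le_sqrt_mul_sqrt _ _ _
    _ ≤ 1 * N := by
          refine mul_le_mul_of_nonneg_right ?_ (Real.sqrt_nonneg _)
          have : ∑ j, (Real.sqrt (t j)) ^ 2 = ∑ j, t j :=
            Finset.sum_congr rfl fun j _ => Real.sq_sqrt (htnn j)
          rw [this]
          calc Real.sqrt (∑ j, t j) ≤ Real.sqrt 1 := Real.sqrt_le_sqrt ht1
          _ = 1 := Real.sqrt_one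
    _ = OmegaExcl g x := by rw [hOm]; ring
end

section
/- Fix a ∈ ℝ^m with a₁ ≥ a₂ ≥ … ≥ a_m ≥ 0, not all zero. For η ≥ 0 define f(η) = (Σ_{i=1}^{k} a_i)² / (k+η)² on the interval where (Σ_{i=1}^{k−1} a_i)/a_k − (k−1) ≤ η < (Σ_{i=1}^{k} a_i)/a_{k+1} − k (with a_{m+1} := 0 and the last interval extending to +∞). Then f is continuous and strictly decreasing on [0,∞), f(0) = a₁², and f(η) → 0 as η → ∞. -/
/-!
Write `S k = a₀ + ⋯ + a_k`. On `η ≥ 0` the waterfilling function is the square of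
`L η = max_k S k / (k + 1 + η)`: for the largest maximizing `k`, comparing its ratio with those of
`k - 1` and `k + 1` yields exactly the two inequalities that place `η` in the `k`-th interval.
A maximum of finitely many continuous, strictly decreasing ratios tending to `0` is again
continuous, strictly decreasing and tends to `0`, and `L 0 = a₀` because the `a_i` are sorted.
-/

lemma div_le_add_div_add_one_iff {s x d : ℝ} (hd : 0 < d) :
    s / d ≤ (s + x) / (d + 1) ↔ s ≤ x * d := by
  rw [div_le_div_iff₀ hd (by linarith)]
  constructor <;> intro h <;> linarith

lemma add_div_add_one_lt_div_iff {s x d : ℝ} (hd : 0 < d) :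
    (s + x) / (d + 1) < s / d ↔ x * d < s := by
  rw [div_lt_div_iff₀ (by linarith) hd]
  constructor <;> intro h <;> linarith

namespace Waterfilling

open Finset Filter Topology

section PartialSum

variable {n : ℕ} (a : Fin n → ℝ)

def partialSum (k : Fin n) : ℝ := ∑ i ∈ Iic k, a i

lemma sum_Iio_add_eq_partialSum (k : Fin n) : ∑ i ∈ Iio k, a i + a k = partialSum a k :=
  sum_Iio_add_eq_sum_Iic k

lemma sum_Iio_eq_partialSum_of_val_eq_succ {j k : Fin n} (hjk : (k : ℕ) = j + 1) :
    ∑ i ∈ Iio k, a i = partialSum a j := by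
  have : Iio k = Iic j := by
    ext i
    simp only [mem_Iio, mem_Iic, Fin.lt_def, Fin.le_def]
    omega
  rw [this, partialSum]

variable [NeZero n]

lemma partialSum_zero : partialSum a 0 = a 0 := by
  have : Iic (0 : Fin n) = {0} := by
    ext i
    simp
  rw [partialSum, this, sum_singleton]

lemma partialSum_le_mul (hsort : ∀ i j : Fin n, i ≤ j → a j ≤ a i) (k : Fin n) :
    partialSum a k ≤ ((k : ℝ) + 1) * a 0 := by
  have := sum_le_card_nsmul (Iic k) a (a 0) fun i _ => hsort 0 i (Fin.zero_le i)
  rw [Fin.card_Iic, nsmul_eq_mul] at this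
  exact_mod_cast this

end PartialSum

variable {n : ℕ} [NeZero n] (a : Fin n → ℝ)

/-- The threshold `λ` of the proximal operator if exactly the first `k + 1` entries survive. -/
noncomputable def candidate (η : ℝ) (k : Fin n) : ℝ := partialSum a k / ((k : ℝ) + 1 + η)

noncomputable def level (η : ℝ) : ℝ := univ.sup' univ_nonempty (candidate a η)

lemma candidate_le_level (η : ℝ) (k : Fin n) : candidate a η k ≤ level a η :=
  le_sup' (candidate a η) (mem_univ k)

lemma level_pos (ha0 : 0 < a 0) {η : ℝ} (hη : 0 ≤ η) : 0 < level a η := by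
  have : 0 < candidate a η 0 := by
    rw [candidate, partialSum_zero]
    positivity
  exact this.trans_le (candidate_le_level a η 0)

lemma level_zero (hsort : ∀ i j : Fin n, i ≤ j → a j ≤ a i) : level a 0 = a 0 := by
  apply le_antisymm
  · refine sup'_le _ _ fun k _ => ?_
    rw [candidate, add_zero, div_le_iff₀ (by positivity), mul_comm]
    exact partialSum_le_mul a hsort k
  · simpa [candidate, partialSum_zero] using candidate_le_level a 0 0

lemma level_strictAntiOn (ha0 : 0 < a 0) : StrictAntiOn (level a) (Set.Ici 0) := by
  intro x (hx : 0 ≤ x) y (hy : 0 ≤ y) hxy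
  obtain ⟨k, -, hk⟩ := exists_mem_eq_sup' univ_nonempty (candidate a y)
  have hSk : 0 < partialSum a k := by
    have h := level_pos a ha0 hy
    rw [level, hk, candidate] at h
    exact (div_pos_iff_of_pos_right (by positivity)).1 h
  calc level a y = candidate a y k := hk
    _ < candidate a x k := div_lt_div_of_pos_left hSk (by positivity) (by linarith)
    _ ≤ level a x := candidate_le_level a x k

lemma continuousOn_level : ContinuousOn (level a) (Set.Ici 0) :=
  ContinuousOn.finset_sup'_apply univ_nonempty fun k _ =>
    continuousOn_const.div (by fun_prop) fun η (hη : 0 ≤ η) => by positivity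

lemma tendsto_level_atTop : Tendsto (level a) atTop (𝓝 0) := by
  have h := Tendsto.finset_sup'_nhds_apply (f := fun k η => candidate a η k) (g := fun _ => 0)
    univ_nonempty fun k _ =>
      tendsto_const_nhds.div_atTop (tendsto_atTop_add_const_left _ _ tendsto_id)
  rwa [sup'_const] at h

lemma exists_largest_maximizer (η : ℝ) :
    ∃ K, candidate a η K = level a η ∧ ∀ k, K < k → candidate a η k < level a η := by
  classical
  set F := univ.filter fun k => candidate a η k = level a η
  have hF : F.Nonempty := by
    obtain ⟨k, -, hk⟩ := exists_mem_eq_sup' univ_nonempty (candidate a η)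
    exact ⟨k, mem_filter.2 ⟨mem_univ k, hk.symm⟩⟩
  refine ⟨F.max' hF, (mem_filter.1 (F.max'_mem hF)).2, fun k hk => ?_⟩
  refine (candidate_le_level a η k).lt_of_ne fun heq => ?_
  exact hk.not_ge (F.le_max' k (mem_filter.2 ⟨mem_univ k, heq⟩))

lemma sum_Iio_le_of_maximizer {η : ℝ} (hη : 0 ≤ η) (ha0 : 0 < a 0) {K : Fin n}
    (hK : candidate a η K = level a η) : ∑ i ∈ Iio K, a i ≤ a K * (η + K) := by
  rcases Nat.eq_zero_or_pos (K : ℕ) with hK0 | hK0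
  · have : K = 0 := Fin.ext hK0
    subst this
    simp only [Fin.val_zero, Nat.cast_zero, add_zero]
    rw [show Iio (0 : Fin n) = ∅ from Iio_eq_empty.2 fun b _ => Fin.zero_le b, sum_empty]
    positivity
  · let P : Fin n := ⟨K - 1, by omega⟩
    have hPK : (K : ℕ) = P + 1 := by simp only [P]; omega
    have hP := hK ▸ candidate_le_level a η P
    have hcast : (P : ℝ) + 1 = K := by exact_mod_cast hPK.symm
    rw [candidate, candidate, ← sum_Iio_add_eq_partialSum a K,
      ← sum_Iio_eq_partialSum_of_val_eq_succ a hPK, hcast,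
      show (K : ℝ) + 1 + η = η + K + 1 by ring, add_comm (K : ℝ),
      div_le_add_div_add_one_iff (by positivity)] at hP
    exact hP

lemma next_mul_lt_partialSum {η : ℝ} (hη : 0 ≤ η) (ha0 : 0 < a 0) {K : Fin n}
    (hK : candidate a η K = level a η) (hlt : ∀ k, K < k → candidate a η k < level a η) :
    (if h : (K : ℕ) + 1 < n then a ⟨(K : ℕ) + 1, h⟩ else 0) * (η + (K : ℝ) + 1) <
      partialSum a K := by
  split_ifs with h
  · set K' : Fin n := ⟨(K : ℕ) + 1, h⟩
    have hK' := hK ▸ hlt K' (Fin.lt_def.2 (Nat.lt_succ_self _))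
    have hcast : (K' : ℝ) = K + 1 := by simp [K']
    rw [candidate, candidate, ← sum_Iio_add_eq_partialSum a K',
      sum_Iio_eq_partialSum_of_val_eq_succ a (rfl : (K' : ℕ) = K + 1), hcast,
      show (K : ℝ) + 1 + 1 + η = η + K + 1 + 1 by ring,
      show (K : ℝ) + 1 + η = η + K + 1 by ring,
      add_div_add_one_lt_div_iff (by positivity)] at hK'
    exact hK'
  · have h := level_pos a ha0 hη
    rw [← hK, candidate] at h
    rw [zero_mul]
    exact (div_pos_iff_of_pos_right (by positivity)).1 h

lemma exists_mem_interval_of_level {η : ℝ} (hη : 0 ≤ η) (ha0 : 0 < a 0) :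
    ∃ k : Fin n, ∑ i ∈ Iio k, a i ≤ a k * (η + k) ∧
      (if h : (k : ℕ) + 1 < n then a ⟨(k : ℕ) + 1, h⟩ else 0) * (η + (k : ℝ) + 1) <
        partialSum a k ∧ candidate a η k = level a η := by
  obtain ⟨K, hK, hlt⟩ := exists_largest_maximizer a η
  exact ⟨K, sum_Iio_le_of_maximizer a hη ha0 hK, next_mul_lt_partialSum a hη ha0 hK hlt, hK⟩

end Waterfilling

/-- Properties of the per-group waterfilling function
`f(η) = (Σ_{i=1}^k a_i)²/(k+η)²` on the interval
`(Σ_{i=1}^{k-1} a_i)/a_k − (k−1) ≤ η < (Σ_{i=1}^k a_i)/a_{k+1} − k`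
(conditions stated in product form so that `a_{k+1} = 0` gives the last
interval extending to `+∞`): `f` is continuous and strictly decreasing on `[0,∞)`,
`f(0) = a₁²`, and `f(η) → 0` as `η → ∞`. -/
theorem waterfilling_props {m : ℕ} (a : Fin (m + 1) → ℝ)
    (hsort : ∀ i j : Fin (m + 1), i ≤ j → a j ≤ a i)
    (hnn : ∀ i, 0 ≤ a i) (hne : ∃ i, a i ≠ 0)
    (f : ℝ → ℝ)
    (hf : ∀ η : ℝ, 0 ≤ η → ∀ k : Fin (m + 1),
      (∑ i ∈ Finset.univ.filter (fun i => i < k), a i) ≤ a k * (η + (k : ℝ)) →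
      (if h : (k : ℕ) + 1 < m + 1 then a ⟨(k : ℕ) + 1, h⟩ else 0) * (η + (k : ℝ) + 1) <
          (∑ i ∈ Finset.univ.filter (fun i => i ≤ k), a i) →
      f η = (∑ i ∈ Finset.univ.filter (fun i => i ≤ k), a i) ^ 2 / ((k : ℝ) + 1 + η) ^ 2) :
    ContinuousOn f (Set.Ici 0) ∧ StrictAntiOn f (Set.Ici 0) ∧ f 0 = (a 0) ^ 2 ∧
      Filter.Tendsto f Filter.atTop (nhds 0) := by
  have ha0 : 0 < a 0 := by
    obtain ⟨i, hi⟩ := hne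
    exact ((hnn i).lt_of_ne' hi).trans_le (hsort 0 i (Fin.zero_le i))
  have hf_eq : ∀ η ∈ Set.Ici (0 : ℝ), f η = Waterfilling.level a η ^ 2 := by
    intro η (hη : 0 ≤ η)
    obtain ⟨k, hlow, hup, hk⟩ := Waterfilling.exists_mem_interval_of_level a hη ha0
    rw [hf η hη k (by rwa [Finset.filter_gt_eq_Iio]) (by rwa [Finset.filter_ge_eq_Iic]),
      Finset.filter_ge_eq_Iic, ← hk, Waterfilling.candidate, Waterfilling.partialSum, div_pow]
  refine ⟨((Waterfilling.continuousOn_level a).pow 2).congr hf_eq, ?_, ?_, ?_⟩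
  · intro x hx y hy hxy
    rw [hf_eq x hx, hf_eq y hy]
    exact pow_lt_pow_left₀ (Waterfilling.level_strictAntiOn a ha0 hx hy hxy)
      (Waterfilling.level_pos a ha0 hy).le two_ne_zero
  · rw [hf_eq 0 Set.self_mem_Ici, Waterfilling.level_zero a hsort]
  · have h := (Waterfilling.tendsto_level_atTop a).pow 2
    rw [zero_pow two_ne_zero] at h
    exact h.congr' ((Filter.eventually_ge_atTop 0).mono fun η hη => (hf_eq η hη).symm)
end

section
/- Let 𝒢 partition [p], let x̂ have support 𝒥, and define r ∈ ℝ^p by r_i = ‖x̂_{G_i∩𝒥}‖₁ · sign(x̂_i) for i ∈ 𝒥 and r_i = 0 otherwise, where G_i is the group containing i. Then for any w ∈ ℝ^p, w_𝒥ᵀ r_𝒥 ≤ Σ_{G: G∩𝒥≠∅} ‖x̂_{G∩𝒥}‖₁ ‖w_{G∩𝒥}‖₁ ≤ Ω_{excl,𝒥}(x̂_𝒥) · Ω_{excl,𝒥}(w_𝒥). -/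
/-- Restricted exclusive group sparsity norm on the index set `I`:
`sqrt (Σ_{G : G∩I≠∅} ‖z_{G∩I}‖₁²)`. -/
noncomputable def OmegaR {p k : ℕ} (g : Fin p → Fin k) (I : Finset (Fin p))
    (z : Fin p → ℝ) : ℝ :=
  Real.sqrt (∑ j ∈ Finset.univ.filter (fun j => ∃ i ∈ I, g i = j),
    (∑ i ∈ I.filter (fun i => g i = j), |z i|) ^ 2)

/-- With `r_i = ‖xhat_{G_i∩𝒥}‖₁ sign(xhat_i)` on the support `𝒥` of `xhat` (and `0` elsewhere),
`w_𝒥ᵀ r_𝒥 ≤ Σ_{G∩𝒥≠∅} ‖xhat_{G∩𝒥}‖₁ ‖w_{G∩𝒥}‖₁ ≤ Ω_{excl,𝒥}(xhat_𝒥) Ω_{excl,𝒥}(w_𝒥)`. -/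
theorem r_inner_product_bounds {p k : ℕ} (g : Fin p → Fin k) (xhat w : Fin p → ℝ) :
    (∑ i ∈ Finset.univ.filter (fun i => xhat i ≠ 0),
        w i * ((∑ i' ∈ (Finset.univ.filter (fun i' => xhat i' ≠ 0)).filter
            (fun i' => g i' = g i), |xhat i'|) * Real.sign (xhat i)))
      ≤ ∑ j ∈ Finset.univ.filter (fun j => ∃ i ∈ Finset.univ.filter (fun i => xhat i ≠ 0), g i = j),
          (∑ i ∈ (Finset.univ.filter (fun i => xhat i ≠ 0)).filter (fun i => g i = j), |xhat i|) *
          (∑ i ∈ (Finset.univ.filter (fun i => xhat i ≠ 0)).filter (fun i => g i = j), |w i|) ∧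
    (∑ j ∈ Finset.univ.filter (fun j => ∃ i ∈ Finset.univ.filter (fun i => xhat i ≠ 0), g i = j),
          (∑ i ∈ (Finset.univ.filter (fun i => xhat i ≠ 0)).filter (fun i => g i = j), |xhat i|) *
          (∑ i ∈ (Finset.univ.filter (fun i => xhat i ≠ 0)).filter (fun i => g i = j), |w i|))
      ≤ OmegaR g (Finset.univ.filter (fun i => xhat i ≠ 0)) xhat *
        OmegaR g (Finset.univ.filter (fun i => xhat i ≠ 0)) w := by
  classical
  constructor
  · -- regroup LHS by fibers of g
    have hmaps : ∀ i ∈ Finset.univ.filter (fun i => xhat i ≠ 0),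
        g i ∈ Finset.univ.filter
          (fun j => ∃ i ∈ Finset.univ.filter (fun i => xhat i ≠ 0), g i = j) := by
      intro i hi
      simp only [Finset.mem_filter, Finset.mem_univ, true_and]
      exact ⟨i, (Finset.mem_filter.mp hi).2, rfl⟩
    rw [← Finset.sum_fiberwise_of_maps_to hmaps
      (fun i => w i * ((∑ i' ∈ (Finset.univ.filter (fun i' => xhat i' ≠ 0)).filter
        (fun i' => g i' = g i), |xhat i'|) * Real.sign (xhat i)))]
    apply Finset.sum_le_sum
    intro j _
    set J := Finset.univ.filter (fun i => xhat i ≠ 0) with hJ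
    have key : ∀ i ∈ J.filter (fun i => g i = j),
        w i * ((∑ i' ∈ J.filter (fun i' => g i' = g i), |xhat i'|) * Real.sign (xhat i))
          ≤ (∑ i' ∈ J.filter (fun i' => g i' = j), |xhat i'|) * |w i| := by
      intro i hi
      obtain ⟨hiJ, hgi⟩ := Finset.mem_filter.mp hi
      rw [hgi]
      set S := ∑ i' ∈ J.filter (fun i' => g i' = j), |xhat i'| with hS
      have hS0 : 0 ≤ S := Finset.sum_nonneg fun _ _ => abs_nonneg _
      calc w i * (S * Real.sign (xhat i)) ≤ |w i * (S * Real.sign (xhat i))| := le_abs_self _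
        _ = |w i| * (S * |Real.sign (xhat i)|) := by
            rw [abs_mul, abs_mul, abs_of_nonneg hS0]
        _ ≤ |w i| * (S * 1) := by
            apply mul_le_mul_of_nonneg_left _ (abs_nonneg _)
            apply mul_le_mul_of_nonneg_left _ hS0
            rcases lt_trichotomy (xhat i) 0 with h | h | h
            · rw [Real.sign_of_neg h]; norm_num
            · rw [h, Real.sign_zero]; norm_num
            · rw [Real.sign_of_pos h]; norm_num
        _ = S * |w i| := by ring
    calc (∑ i ∈ J.filter (fun i => g i = j),
            w i * ((∑ i' ∈ J.filter (fun i' => g i' = g i), |xhat i'|) * Real.sign (xhat i)))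
        ≤ ∑ i ∈ J.filter (fun i => g i = j),
            (∑ i' ∈ J.filter (fun i' => g i' = j), |xhat i'|) * |w i| :=
          Finset.sum_le_sum key
      _ = (∑ i ∈ J.filter (fun i => g i = j), |xhat i|) *
            (∑ i ∈ J.filter (fun i => g i = j), |w i|) := by
          rw [← Finset.mul_sum]
  · -- Cauchy–Schwarz
    rw [OmegaR, OmegaR]
    convert Real.sum_mul_le_sqrt_mul_sqrt (Finset.univ.filter (fun j => ∃ i ∈ Finset.univ.filter (fun i => xhat i ≠ 0), g i = j))
      (fun j => ∑ i ∈ (Finset.univ.filter (fun i => xhat i ≠ 0)).filter (fun i => g i = j), |xhat i|)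
      (fun j => ∑ i ∈ (Finset.univ.filter (fun i => xhat i ≠ 0)).filter (fun i => g i = j), |w i|)
      using 3 <;> simp
end

section
/- Let 𝒢 partition [p] and let x̂ have support 𝒥 ≠ ∅. For all w ∈ ℝ^p, Ω_excl(w) ≥ (1/Ω_{excl,𝒥}(x̂_𝒥)) Σ_{G: G∩𝒥≠∅} ‖x̂_{G∩𝒥}‖₁ (‖w_{G∩𝒥}‖₁ + ‖w_{G∩𝒥ᶜ}‖₁). -/
/-- For `xhat` with nonempty support `𝒥`,
`Ω_excl(w) ≥ Ω_{excl,𝒥}(xhat_𝒥)⁻¹ Σ_{G∩𝒥≠∅} ‖xhat_{G∩𝒥}‖₁ (‖w_{G∩𝒥}‖₁ + ‖w_{G∩𝒥ᶜ}‖₁)`. -/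
theorem omegaExcl_lower_bound {p k : ℕ} (g : Fin p → Fin k) (xhat : Fin p → ℝ)
    (hx : xhat ≠ 0) (w : Fin p → ℝ) :
    (OmegaR g (Finset.univ.filter (fun i => xhat i ≠ 0)) xhat)⁻¹ *
      ∑ j ∈ Finset.univ.filter (fun j => ∃ i ∈ Finset.univ.filter (fun i => xhat i ≠ 0), g i = j),
        (∑ i ∈ Finset.univ.filter (fun i => g i = j ∧ xhat i ≠ 0), |xhat i|) *
        ((∑ i ∈ Finset.univ.filter (fun i => g i = j ∧ xhat i ≠ 0), |w i|) +
         (∑ i ∈ Finset.univ.filter (fun i => g i = j ∧ xhat i = 0), |w i|))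
      ≤ OmegaExcl g w := by
  classical
  set J : Finset (Fin p) := Finset.univ.filter (fun i => xhat i ≠ 0) with hJ
  set S : Finset (Fin k) := Finset.univ.filter (fun j => ∃ i ∈ J, g i = j) with hS
  set a : Fin k → ℝ := fun j => ∑ i ∈ Finset.univ.filter (fun i => g i = j ∧ xhat i ≠ 0), |xhat i|
  set d : Fin k → ℝ := fun j => ∑ i ∈ Finset.univ.filter (fun i => g i = j), |w i|
  have ha : ∀ j, 0 ≤ a j := fun j => Finset.sum_nonneg fun i _ => abs_nonneg _
  have hd : ∀ j, 0 ≤ d j := fun j => Finset.sum_nonneg fun i _ => abs_nonneg _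
  -- the inner sum splits
  have hsplit : ∀ j : Fin k,
      (∑ i ∈ Finset.univ.filter (fun i => g i = j ∧ xhat i ≠ 0), |w i|) +
      (∑ i ∈ Finset.univ.filter (fun i => g i = j ∧ xhat i = 0), |w i|) = d j := by
    intro j
    have := Finset.sum_filter_add_sum_filter_not
      (Finset.univ.filter (fun i => g i = j)) (fun i => xhat i ≠ 0) (fun i => |w i|)
    simpa [Finset.filter_filter, and_comm, not_not] using this
  -- OmegaR equals sqrt of sum of a j ^ 2 over S
  have hA : OmegaR g J xhat = Real.sqrt (∑ j ∈ S, a j ^ 2) := by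
    unfold OmegaR
    congr 1
    refine Finset.sum_congr rfl fun j _ => ?_
    congr 1
    apply Finset.sum_congr _ fun _ _ => rfl
    rw [hJ, Finset.filter_filter]
    exact Finset.filter_congr fun i _ => by tauto
  set A : ℝ := OmegaR g J xhat with hAdef
  have hApos : 0 < A := by
    rw [hA]
    apply Real.sqrt_pos.2
    obtain ⟨i0, hi0⟩ : ∃ i, xhat i ≠ 0 := by
      by_contra h; push_neg at h; exact hx (funext h)
    have hjS : g i0 ∈ S := by
      simp [hS, hJ]; exact ⟨i0, hi0, rfl⟩
    have hai : 0 < a (g i0) := by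
      apply Finset.sum_pos'
      · exact fun i _ => abs_nonneg _
      · exact ⟨i0, by simp [hi0], abs_pos.2 hi0⟩
    refine Finset.sum_pos' (fun j _ => sq_nonneg _) ⟨g i0, hjS, by positivity⟩
  -- Cauchy-Schwarz
  have hCS : ∑ j ∈ S, a j * d j ≤ A * OmegaExcl g w := by
    calc ∑ j ∈ S, a j * d j
        ≤ Real.sqrt (∑ j ∈ S, a j ^ 2) * Real.sqrt (∑ j ∈ S, d j ^ 2) :=
          Real.sum_mul_le_sqrt_mul_sqrt _ _ _
      _ ≤ A * OmegaExcl g w := by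
          rw [hA]
          apply mul_le_mul_of_nonneg_left _ (Real.sqrt_nonneg _)
          apply Real.sqrt_le_sqrt
          exact Finset.sum_le_sum_of_subset_of_nonneg (Finset.subset_univ S)
            (fun j _ _ => sq_nonneg _)
  rw [inv_mul_le_iff₀ hApos]
  refine le_trans (le_of_eq ?_) hCS
  refine Finset.sum_congr (by ext j; simp [hS]) fun j _ => ?_
  show a j * _ = a j * d j
  rw [hsplit]
end
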